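/- Suppose a_h, a_l are nonzero complex polynomials, s > 0 is real, intermediate polynomial terms b_j(λ)e^{−s_j λ} have 0 < s_j < s, and there exist a polynomial g and c ∈ ℂ with a_h(λ) + Σ_j b_j(λ)e^{−s_j λ} + a_l(λ)e^{−sλ} = g(λ)e^{cλ} for all λ ∈ ℂ. Then c = −s, and consequently a_h is identically zero, a contradiction; hence no such g and c exist. -/

import Mathlib

/-!
Move the term `g(λ) e^{cλ}` to the left, so that an exponential polynomial
`∑ Pᵢ(λ) e^{μᵢ λ}` vanishes identically. If one frequency `μₖ` dominates along a ray
`t ↦ t u` (every other `Re ((μᵢ - μₖ) u)` is negative), dividing by `e^{μₖ t u}` shows that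
`Pₖ(t u) → 0`, and a polynomial that tends to `0` along a ray is zero. For `Re c < 0` the
constant term `a_h` dominates on `[0, ∞)`; for `Re c = 0` the term `a_l e^{-sλ}` dominates on
`(-∞, 0]`; for `Re c > 0` the term `g e^{cλ}` dominates on `[0, ∞)`, so `g = 0` and then `a_h`
dominates again.
-/

open Filter Topology Asymptotics Polynomial

theorem Polynomial.eq_zero_of_tendsto_eval {α R : Type*} [NormedRing R]
    [IsAbsoluteValue (norm : R → ℝ)] {l : Filter α} [l.NeBot] {z : α → R}
    (hz : Tendsto (fun x => ‖z x‖) l atTop) {p : R[X]}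
    (h : Tendsto (fun x => p.eval (z x)) l (𝓝 0)) : p = 0 := by
  rcases lt_or_ge 0 p.degree with hdeg | hdeg
  · exact absurd (p.tendsto_norm_atTop hdeg hz) (not_tendsto_atTop_of_tendsto_nhds h.norm)
  · rw [eq_C_of_degree_le_zero hdeg] at h ⊢
    simp only [eval_C] at h
    rw [tendsto_nhds_unique tendsto_const_nhds h, C_0]

theorem tendsto_norm_ofReal_mul_atTop {u : ℂ} (hu : u ≠ 0) :
    Tendsto (fun t : ℝ => ‖(t : ℂ) * u‖) atTop atTop := by
  simpa only [norm_mul, Complex.norm_real, Real.norm_eq_abs] using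
    tendsto_abs_atTop_atTop.atTop_mul_const (norm_pos_iff.2 hu)

theorem Real.tendsto_pow_mul_exp_mul_atTop_nhds_zero (n : ℕ) {a : ℝ} (ha : a < 0) :
    Tendsto (fun t : ℝ => t ^ n * Real.exp (a * t)) atTop (𝓝 0) := by
  simpa using tendsto_rpow_mul_exp_neg_mul_atTop_nhds_zero n (-a) (by linarith)

theorem Polynomial.tendsto_eval_ofReal_mul_mul_exp (p : ℂ[X]) {u w : ℂ} (h : (w * u).re < 0) :
    Tendsto (fun t : ℝ => p.eval (t * u) * Complex.exp (w * (t * u))) atTop (𝓝 0) := by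
  have hu : u ≠ 0 := by rintro rfl; simp at h
  have hpoly : (fun t : ℝ => p.eval (t * u)) =O[atTop] fun t : ℝ => t ^ p.natDegree := by
    have := (isBigO_cobounded_of_degree_le (P := p) (Q := X ^ p.natDegree)
      (by simp [degree_le_natDegree])).comp_tendsto
      (tendsto_norm_atTop_iff_cobounded.1 (tendsto_norm_ofReal_mul_atTop hu))
    refine this.trans (isBigO_of_le' (c := ‖u‖ ^ p.natDegree) _ fun t => ?_)
    simp [mul_pow, mul_comm]
  have hexp : (fun t : ℝ => Complex.exp (w * (t * u))) =O[atTop]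
      fun t : ℝ => Real.exp ((w * u).re * t) :=
    isBigO_of_le _ fun t => by simp [Complex.norm_exp, ← mul_assoc, mul_right_comm w]
  exact (hpoly.mul hexp).trans_tendsto
    (Real.tendsto_pow_mul_exp_mul_atTop_nhds_zero _ h)

theorem Polynomial.eq_zero_of_sum_eval_mul_exp_eq_zero {ι : Type*} [Fintype ι] [DecidableEq ι]
    (P : ι → ℂ[X]) (μ : ι → ℂ) (h : ∀ lam, ∑ i, (P i).eval lam * Complex.exp (μ i * lam) = 0)
    {u : ℂ} (hu : u ≠ 0) (k : ι) (hdom : ∀ i ≠ k, P i ≠ 0 → ((μ i - μ k) * u).re < 0) :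
    P k = 0 := by
  refine eq_zero_of_tendsto_eval (tendsto_norm_ofReal_mul_atTop hu) ?_
  have hrest : Tendsto (fun t : ℝ => -∑ i ∈ Finset.univ.erase k,
      (P i).eval (t * u) * Complex.exp ((μ i - μ k) * (t * u))) atTop (𝓝 0) := by
    have hterm : ∀ i ∈ Finset.univ.erase k, Tendsto (fun t : ℝ =>
        (P i).eval (t * u) * Complex.exp ((μ i - μ k) * (t * u))) atTop (𝓝 0) := fun i hi => by
      by_cases hP : P i = 0
      · simp [hP]
      · exact (P i).tendsto_eval_ofReal_mul_mul_exp (hdom i (Finset.ne_of_mem_erase hi) hP)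
    simpa only [Finset.sum_const_zero, neg_zero] using (tendsto_finsetSum _ hterm).neg
  refine hrest.congr fun t => ?_
  have hk := h (t * u)
  rw [← Finset.add_sum_erase _ _ (Finset.mem_univ k)] at hk
  simp_rw [sub_mul, Complex.exp_sub, ← mul_div_assoc, ← Finset.sum_div, ← neg_div,
    div_eq_iff (Complex.exp_ne_zero _)]
  linear_combination -hk

theorem sum_elim_eval_mul_exp_eq_zero {m : ℕ} {ah al g : ℂ[X]} {b : Fin m → ℂ[X]}
    {σ : Fin m → ℂ} {s c : ℂ}
    (h : ∀ lam, ah.eval lam + ∑ j, (b j).eval lam * Complex.exp (-σ j * lam)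
      + al.eval lam * Complex.exp (-s * lam) = g.eval lam * Complex.exp (c * lam)) (lam : ℂ) :
    ∑ i, (Sum.elim b ![ah, al, -g] i).eval lam
      * Complex.exp (Sum.elim (-σ) ![0, -s, c] i * lam) = 0 := by
  simp only [Fintype.sum_sum_type, Fin.sum_univ_three, Sum.elim_inl, Sum.elim_inr,
    Matrix.cons_val_zero, Matrix.cons_val_one, Matrix.cons_val_two, Matrix.head_cons,
    Matrix.tail_cons, Pi.neg_apply, zero_mul, Complex.exp_zero, mul_one, eval_neg]
  linear_combination h lam

theorem stmt_11 (ah al : Polynomial ℂ) (hah : ah ≠ 0) (hal : al ≠ 0)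
    (s : ℝ) (hs : 0 < s) (m : ℕ) (b : Fin m → Polynomial ℂ)
    (sj : Fin m → ℝ) (hsj : ∀ j, 0 < sj j ∧ sj j < s) :
    ¬ ∃ (g : Polynomial ℂ) (c : ℂ), ∀ lam : ℂ,
      ah.eval lam + (∑ j : Fin m, (b j).eval lam * Complex.exp (-(sj j : ℂ) * lam))
        + al.eval lam * Complex.exp (-(s : ℂ) * lam)
      = g.eval lam * Complex.exp (c * lam) := by
  rintro ⟨g, c, h⟩
  have dominant {u : ℂ} (hu : u ≠ 0) :=
    eq_zero_of_sum_eval_mul_exp_eq_zero _ _ (sum_elim_eval_mul_exp_eq_zero h) hu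
  obtain hc | hc | hc := lt_trichotomy c.re 0
  on_goal 1 => refine hah (dominant one_ne_zero (.inr 0) ?_)
  on_goal 2 => refine hal (dominant (neg_ne_zero.2 one_ne_zero) (.inr 1) ?_)
  on_goal 3 =>
    have hg : g = 0 := neg_eq_zero.1 (dominant one_ne_zero (.inr 2) ?_)
    subst hg
    refine hah (dominant one_ne_zero (.inr 0) ?_)
  all_goals
    rintro (j | i) hne hP
    · simp only [Sum.elim_inl, Pi.neg_apply, Sum.elim_inr, Matrix.cons_val, mul_one, mul_neg,
        Complex.sub_re, Complex.neg_re, Complex.ofReal_re, Complex.zero_re]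
      linarith [(hsj j).1, (hsj j).2]
    · fin_cases i <;> simp only [Fin.zero_eta, Fin.mk_one, Fin.reduceFinMk, Sum.elim_inr,
        Matrix.cons_val, ne_eq, Sum.inr.injEq, neg_eq_zero, neg_zero, Complex.sub_re, Complex.neg_re,
        Complex.ofReal_re, Complex.zero_re, mul_one, mul_neg] at hne hP ⊢ <;> grind
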